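/- arXiv:1505.07402 — 2 statements merged into one kernel-verified Lean document; each statement's English description precedes it below -/
import Mathlib

section
/- Under Assumptions 1 and 2, the closed-loop system matrix A is invertible; consequently, for every constant disturbance vector b ∈ ℝ^{3n+(n−1)} the affine system x' = A x + b has a unique equilibrium. -/
/-! The kernel of `A` is trivial. In an equilibrium the `φ''`-row gives `γ φ'' = Sᵀ u` with
`u = (K^V)⁻¹ K^ω ω̂`; as `ker Sᵀ = span 1` and `L_φ 1 = 0`, the coupling term becomes
`L_φ S φ'' = (k_φ / γ) L_R u` by Assumption 1. Pairing the `ω̂`-, `V̂`- and `η`-rows with `u`, `-V̂`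
and `-η` then expresses zero as a sum of the nonnegative terms
`(K^droop K^ω ω̂² + (K^ω ω̂ - K^V V̂)²) / K^V`, `ηᵀ L_η η` and
`(k_φ / γ) (u - V̂/2)ᵀ L_R (u - V̂/2) + (V^nom - k_φ / (4γ)) V̂ᵀ L_R V̂`, the last one by
Assumption 2. So `ω̂ = V̂ = 0`, whence `φ'' = 0` and `η = 0`. -/

open Matrix Filter

/-- Index type for the state `(ω̂, V̂, η, φ'')` of dimension `3n + (n-1)`. -/
abbrev Idx (n : ℕ) := (Fin n ⊕ Fin n) ⊕ (Fin n ⊕ Fin (n - 1))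

/-- A connected-graph Laplacian: symmetric positive semidefinite, `L 1 = 0`,
and the kernel is exactly the span of the all-ones vector. -/
def IsConnLaplacian {n : ℕ} (L : Matrix (Fin n) (Fin n) ℝ) : Prop :=
  L.PosSemidef ∧ L *ᵥ (fun _ => (1 : ℝ)) = 0 ∧
    ∀ v : Fin n → ℝ, L *ᵥ v = 0 → ∃ c : ℝ, v = fun _ => c

/-- The closed-loop system matrix `A` of the reduced dynamics
`(ω̂, V̂, η, φ'')`. -/
noncomputable def closedLoopA {n : ℕ}
    (M E Kw KV Kd KdI LR Leta Lphi : Matrix (Fin n) (Fin n) ℝ)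
    (S : Matrix (Fin n) (Fin (n - 1)) ℝ) (Vnom γ : ℝ) :
    Matrix (Idx n) (Idx n) ℝ :=
  Matrix.fromBlocks
    (Matrix.fromBlocks
      (-(M * (Kd + Kw))) (M * KV)
      ((1 / Vnom) • (E * Kw)) (-(E * (LR + (1 / Vnom) • KV))))
    (Matrix.fromBlocks
      (-(M * (KV * Kw⁻¹ * KdI))) (-(M * (Lphi * S)))
      0 ((1 / Vnom) • (E * (Lphi * S))))
    (Matrix.fromBlocks
      KdI 0
      (Sᵀ * KV⁻¹ * Kw) 0)
    (Matrix.fromBlocks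
      (-Leta) 0
      0 (-(γ • (1 : Matrix (Fin (n - 1)) (Fin (n - 1)) ℝ))))

section Projection

variable {K ι κ : Type*} [Field K] [Fintype ι] [Fintype κ] [DecidableEq κ]

theorem Matrix.exists_eq_const_of_transpose_mulVec_eq_zero {S : Matrix ι κ K}
    (hcard : Fintype.card κ + 1 = Fintype.card ι) (hS : Sᵀ * S = 1)
    (hS1 : Sᵀ *ᵥ (fun _ => 1) = 0) {d : ι → K} (hd : Sᵀ *ᵥ d = 0) :
    ∃ c : K, d = fun _ => c := by
  have hsurj : Function.Surjective (mulVecLin Sᵀ) := fun y =>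
    ⟨S *ᵥ y, by rw [mulVecLin_apply, mulVec_mulVec, hS, one_mulVec]⟩
  have hker : Module.finrank K (LinearMap.ker (mulVecLin Sᵀ)) = 1 := by
    have := LinearMap.finrank_range_add_finrank_ker (mulVecLin Sᵀ)
    rw [LinearMap.range_eq_top.2 hsurj, finrank_top] at this
    simp only [Module.finrank_fintype_fun_eq_card] at this
    omega
  have hone : (fun _ => 1 : ι → K) ≠ 0 := by
    have : Nonempty ι := Fintype.card_pos_iff.1 (by omega)
    exact Function.ne_iff.2 ⟨Classical.arbitrary ι, one_ne_zero⟩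
  have hspan : K ∙ (fun _ => 1 : ι → K) = LinearMap.ker (mulVecLin Sᵀ) := by
    refine Submodule.eq_of_le_of_finrank_le ?_ ?_
    · rw [Submodule.span_singleton_le_iff_mem]
      exact hS1
    · rw [hker, finrank_span_singleton hone]
  obtain ⟨c, hc⟩ := Submodule.mem_span_singleton.1 (hspan ▸ hd : d ∈ K ∙ fun _ => 1)
  exact ⟨c, by rw [← hc]; funext; simp⟩

theorem Matrix.mulVec_mulVec_transpose_mulVec {S : Matrix ι κ K}
    (hcard : Fintype.card κ + 1 = Fintype.card ι) (hS : Sᵀ * S = 1)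
    (hS1 : Sᵀ *ᵥ (fun _ => 1) = 0) {L : Matrix ι ι K} (hL : L *ᵥ (fun _ => 1) = 0)
    (u : ι → K) : L *ᵥ S *ᵥ Sᵀ *ᵥ u = L *ᵥ u := by
  have hproj : Sᵀ *ᵥ (S *ᵥ Sᵀ *ᵥ u - u) = 0 := by
    rw [mulVec_sub, mulVec_mulVec, hS, one_mulVec, sub_self]
  obtain ⟨c, hc⟩ := exists_eq_const_of_transpose_mulVec_eq_zero hcard hS hS1 hproj
  have hconst : L *ᵥ (fun _ => c) = 0 := by
    rw [show (fun _ => c : ι → K) = c • fun _ => 1 by ext; simp, mulVec_smul, hL, smul_zero]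
  rw [← sub_eq_zero, ← mulVec_sub, hc, hconst]

end Projection

theorem Matrix.inv_diagonal_of_ne_zero {ι K : Type*} [Fintype ι] [DecidableEq ι] [Field K]
    {d : ι → K} (hd : ∀ i, d i ≠ 0) : (diagonal d)⁻¹ = diagonal d⁻¹ :=
  inv_eq_right_inv <| by
    rw [diagonal_mul_diagonal, ← diagonal_one]
    exact congrArg diagonal (funext fun i => mul_inv_cancel₀ (hd i))

theorem Matrix.PosSemidef.nonneg_mul_sub_dotProduct_add {ι : Type*} [Fintype ι]
    {L : Matrix ι ι ℝ} (hL : L.PosSemidef) {c a : ℝ} (hc : 0 ≤ c) (hca : c ≤ 4 * a)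
    (u v : ι → ℝ) : 0 ≤ c * ((u - v) ⬝ᵥ L *ᵥ u) + a * (v ⬝ᵥ L *ᵥ v) := by
  have hquad (x : ι → ℝ) : 0 ≤ x ⬝ᵥ L *ᵥ x := by simpa using hL.dotProduct_mulVec_nonneg x
  have hsymm : u ⬝ᵥ L *ᵥ v = v ⬝ᵥ L *ᵥ u := by
    rw [dotProduct_mulVec, ← mulVec_transpose, ← conjTranspose_eq_transpose_of_trivial,
      hL.isHermitian.eq, dotProduct_comm]
  have hsquare : c * ((u - v) ⬝ᵥ L *ᵥ u) + a * (v ⬝ᵥ L *ᵥ v) =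
      c * ((u - (1 / 2 : ℝ) • v) ⬝ᵥ L *ᵥ (u - (1 / 2 : ℝ) • v)) +
        (a - c / 4) * (v ⬝ᵥ L *ᵥ v) := by
    simp only [mulVec_sub, mulVec_smul, sub_dotProduct, dotProduct_sub, smul_dotProduct,
      dotProduct_smul, smul_eq_mul]
    linear_combination c / 2 * hsymm
  rw [hsquare]
  exact add_nonneg (mul_nonneg hc (hquad _)) (mul_nonneg (by linarith) (hquad v))

theorem blockEquations_of_closedLoopA_mulVec_eq_zero {n : ℕ} {m e kw kv kd kdi : Fin n → ℝ}
    (hm : ∀ i, m i ≠ 0) (he : ∀ i, e i ≠ 0) (hkw : ∀ i, kw i ≠ 0) (hkv : ∀ i, kv i ≠ 0)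
    {LR Leta Lphi : Matrix (Fin n) (Fin n) ℝ} {S : Matrix (Fin n) (Fin (n - 1)) ℝ}
    {Vnom γ : ℝ} (hVnom : Vnom ≠ 0) {ω V η : Fin n → ℝ} {φ : Fin (n - 1) → ℝ}
    (h : closedLoopA (diagonal m) (diagonal e) (diagonal kw) (diagonal kv) (diagonal kd)
      (diagonal kdi) LR Leta Lphi S Vnom γ *ᵥ Sum.elim (Sum.elim ω V) (Sum.elim η φ) = 0) :
    (∀ i, (kd i + kw i) * ω i = kv i * V i - kv i * kdi i / kw i * η i - (Lphi *ᵥ S *ᵥ φ) i) ∧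
    (∀ i, kw i * ω i = Vnom * (LR *ᵥ V) i + kv i * V i - (Lphi *ᵥ S *ᵥ φ) i) ∧
    (∀ i, kdi i * ω i = (Leta *ᵥ η) i) ∧
    Sᵀ *ᵥ (fun i => kw i * ω i / kv i) = γ • φ := by
  have hu : (diagonal kv)⁻¹ *ᵥ (diagonal kw *ᵥ ω) = fun i => kw i * ω i / kv i := by
    ext i
    rw [inv_diagonal_of_ne_zero hkv, mulVec_diagonal, mulVec_diagonal, Pi.inv_apply,
      inv_mul_eq_div]
  simp only [closedLoopA, fromBlocks_mulVec, Sum.elim_comp_inl, Sum.elim_comp_inr,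
    inv_diagonal_of_ne_zero hkw, ← mulVec_mulVec, hu, neg_mulVec, add_mulVec, smul_mulVec,
    zero_mulVec, one_mulVec, add_zero, zero_add] at h
  simp only [funext_iff, Sum.forall, Sum.elim_inl, Sum.elim_inr, Pi.add_apply, Pi.neg_apply,
    Pi.zero_apply, Pi.smul_apply, smul_eq_mul, mulVec_diagonal, Pi.inv_apply] at h
  obtain ⟨⟨h1, h2⟩, h3, h4⟩ := h
  refine ⟨fun i => ?_, fun i => ?_, fun i => ?_, funext fun j => ?_⟩
  · apply mul_left_cancel₀ (hm i)
    linear_combination -h1 i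
  · apply mul_left_cancel₀ (mul_ne_zero (he i) (one_div_ne_zero hVnom))
    linear_combination h2 i - e i * (LR *ᵥ V) i * one_div_mul_cancel hVnom
  · linear_combination h3 i
  · rw [Pi.smul_apply, smul_eq_mul]
    linear_combination h4 j

theorem equilibrium_omega_V_eq_zero {ι : Type*} [Fintype ι] {kw kv kd kdi : ι → ℝ}
    (hkw : ∀ i, 0 < kw i) (hkv : ∀ i, 0 < kv i) (hkd : ∀ i, 0 < kd i)
    {LR Leta : Matrix ι ι ℝ} (hLR : LR.PosSemidef) (hLeta : Leta.PosSemidef)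
    {Vnom c : ℝ} (hc : 0 ≤ c) (hcV : c ≤ 4 * Vnom) {ω V η Lw : ι → ℝ}
    (h1 : ∀ i, (kd i + kw i) * ω i = kv i * V i - kv i * kdi i / kw i * η i - Lw i)
    (h2 : ∀ i, kw i * ω i = Vnom * (LR *ᵥ V) i + kv i * V i - Lw i)
    (h3 : ∀ i, kdi i * ω i = (Leta *ᵥ η) i)
    (hLw : Lw = c • LR *ᵥ fun i => kw i * ω i / kv i) : ω = 0 ∧ V = 0 := by
  set u : ι → ℝ := fun i => kw i * ω i / kv i
  set T : ι → ℝ := fun i => (kd i * kw i * ω i ^ 2 + (kw i * ω i - kv i * V i) ^ 2) / kv i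
  have hT_nonneg (i : ι) : 0 ≤ T i := by
    have := hkd i; have := hkw i; have := hkv i
    positivity
  -- Lyapunov identity: pair the three equations with `u i`, `-V i` and `-η i` and add.
  have hpointwise (i : ι) :
      T i + η i * (Leta *ᵥ η) i + (u i - V i) * Lw i + Vnom * (V i * (LR *ᵥ V) i) = 0 := by
    have := (hkw i).ne'; have := (hkv i).ne'
    simp only [T, u]
    field_simp
    linear_combination (kw i * ω i) * h1 i - kv i * V i * h2 i - kv i * η i * h3 i
      - kv i * kdi i * ω i * η i * mul_inv_cancel₀ (hkw i).ne'
  have hsum : ∑ i, T i + η ⬝ᵥ Leta *ᵥ η + (u - V) ⬝ᵥ Lw + Vnom * (V ⬝ᵥ LR *ᵥ V) = 0 := by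
    have := Finset.sum_eq_zero (s := Finset.univ) fun i _ => hpointwise i
    simpa only [Finset.sum_add_distrib, ← Finset.mul_sum, dotProduct, Pi.sub_apply] using this
  have hcoupling : (u - V) ⬝ᵥ Lw = c * ((u - V) ⬝ᵥ LR *ᵥ u) := by
    rw [hLw, dotProduct_smul, smul_eq_mul]
  have hT : ∀ i, T i = 0 := by
    have hLR_part := hLR.nonneg_mul_sub_dotProduct_add hc hcV u V
    have hLeta_part : 0 ≤ η ⬝ᵥ Leta *ᵥ η := by simpa using hLeta.dotProduct_mulVec_nonneg η
    have hTsum : ∑ i, T i = 0 :=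
      le_antisymm (by linarith) (Finset.sum_nonneg fun i _ => hT_nonneg i)
    simpa using (Finset.sum_eq_zero_iff_of_nonneg fun i _ => hT_nonneg i).1 hTsum
  have hωV (i : ι) : ω i = 0 ∧ V i = 0 := by
    have hnum := (div_eq_zero_iff.1 (hT i)).resolve_right (hkv i).ne'
    obtain ⟨hω, hV⟩ := (add_eq_zero_iff_of_nonneg (by have := hkd i; have := hkw i; positivity)
      (sq_nonneg _)).1 hnum
    have hω : ω i = 0 := by simpa [(hkd i).ne', (hkw i).ne'] using hω
    refine ⟨hω, ?_⟩
    simpa [hω, (hkv i).ne'] using hV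
  exact ⟨funext fun i => (hωV i).1, funext fun i => (hωV i).2⟩

theorem isUnit_closedLoopA {n : ℕ} (hn : n ≠ 0) {m e kw kv kd kdi : Fin n → ℝ}
    (hm : ∀ i, 0 < m i) (he : ∀ i, 0 < e i) (hkw : ∀ i, 0 < kw i)
    (hkv : ∀ i, 0 < kv i) (hkd : ∀ i, 0 < kd i) (hkdi : ∀ i, 0 < kdi i)
    {LR Leta Lphi : Matrix (Fin n) (Fin n) ℝ} (hLR : LR.PosSemidef) (hLeta : Leta.PosSemidef)
    (hLphi : Lphi *ᵥ (fun _ => 1) = 0) {S : Matrix (Fin n) (Fin (n - 1)) ℝ}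
    (hS : Sᵀ * S = 1) (hS1 : Sᵀ *ᵥ (fun _ => 1) = 0) {Vnom γ kphi : ℝ}
    (hVnom : 0 < Vnom) (hγ : 0 < γ) (hkphi : 0 ≤ kphi) (hLphi_LR : Lphi = kphi • LR)
    (hkphi_le : kphi ≤ 4 * Vnom * γ) :
    IsUnit (closedLoopA (diagonal m) (diagonal e) (diagonal kw) (diagonal kv) (diagonal kd)
      (diagonal kdi) LR Leta Lphi S Vnom γ) := by
  refine mulVec_injective_iff_isUnit.1 <|
    (injective_iff_map_eq_zero (mulVecLin _)).2 fun x hx => ?_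
  obtain ⟨ω, V, η, φ, rfl⟩ : ∃ ω V η φ, x = Sum.elim (Sum.elim ω V) (Sum.elim η φ) :=
    ⟨_, _, _, _, by ext ((i | i) | (i | i)) <;> rfl⟩
  obtain ⟨h1, h2, h3, h4⟩ := blockEquations_of_closedLoopA_mulVec_eq_zero (fun i => (hm i).ne')
    (fun i => (he i).ne') (fun i => (hkw i).ne') (fun i => (hkv i).ne') hVnom.ne' hx
  have hcard : Fintype.card (Fin (n - 1)) + 1 = Fintype.card (Fin n) := by simp; omega
  have hLw : Lphi *ᵥ S *ᵥ φ = (kphi / γ) • LR *ᵥ fun i => kw i * ω i / kv i := by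
    have hφ : φ = γ⁻¹ • Sᵀ *ᵥ fun i => kw i * ω i / kv i := by
      rw [h4, smul_smul, inv_mul_cancel₀ hγ.ne', one_smul]
    rw [hφ, mulVec_smul, mulVec_smul, mulVec_mulVec_transpose_mulVec hcard hS hS1 hLphi,
      hLphi_LR, smul_mulVec, smul_smul, div_eq_inv_mul]
  obtain ⟨hω, hV⟩ := equilibrium_omega_V_eq_zero hkw hkv hkd hLR hLeta
    (div_nonneg hkphi hγ.le) ((div_le_iff₀ hγ).2 hkphi_le) h1 h2 h3 hLw
  have hφ : φ = 0 := by
    simp only [hω, Pi.zero_apply, mul_zero, zero_div, ← Pi.zero_def, mulVec_zero] at h4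
    exact (smul_eq_zero.1 h4.symm).resolve_left hγ.ne'
  have hη : η = 0 := by
    funext i
    have h1i := h1 i
    simp only [hω, hV, hφ, mulVec_zero, Pi.zero_apply, mul_zero] at h1i
    have hpos : 0 < kv i * kdi i / kw i := div_pos (mul_pos (hkv i) (hkdi i)) (hkw i)
    exact (mul_eq_zero.1 (by linarith : kv i * kdi i / kw i * η i = 0)).resolve_left hpos.ne'
  rw [hω, hV, hη, hφ]
  ext ((i | i) | (i | i)) <;> rfl

/-- Under Assumptions 1 and 2, the closed-loop matrix `A` is invertible, and
hence for every constant disturbance `b` the affine system `ẋ = A x + b`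
has a unique equilibrium. -/
theorem stmt_2 {n : ℕ} (hn : 2 ≤ n)
    (m e kw kv kd kdi : Fin n → ℝ)
    (hm : ∀ i, 0 < m i) (he : ∀ i, 0 < e i) (hkw : ∀ i, 0 < kw i)
    (hkv : ∀ i, 0 < kv i) (hkd : ∀ i, 0 < kd i) (hkdi : ∀ i, 0 < kdi i)
    (LR Leta Lphi : Matrix (Fin n) (Fin n) ℝ)
    (hLR : IsConnLaplacian LR) (hLeta : IsConnLaplacian Leta)
    (hLphi : IsConnLaplacian Lphi)
    (S : Matrix (Fin n) (Fin (n - 1)) ℝ)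
    (hS : Sᵀ * S = 1) (hS1 : Sᵀ *ᵥ (fun _ => (1 : ℝ)) = 0)
    (Vnom γ kphi : ℝ) (hVnom : 0 < Vnom) (hγ : 0 < γ) (hkphi : 0 < kphi)
    -- Assumption 1
    (hass1 : Lphi = kphi • LR)
    -- Assumption 2
    (hass2 : γ > kphi / (4 * Vnom))
    (A : Matrix (Idx n) (Idx n) ℝ)
    (hA : A = closedLoopA (Matrix.diagonal m) (Matrix.diagonal e)
      (Matrix.diagonal kw) (Matrix.diagonal kv) (Matrix.diagonal kd)
      (Matrix.diagonal kdi) LR Leta Lphi S Vnom γ) :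
    IsUnit A ∧ ∀ b : Idx n → ℝ, ∃! x : Idx n → ℝ, A *ᵥ x + b = 0 := by
  have hkphi_le : kphi ≤ 4 * Vnom * γ := by
    rw [gt_iff_lt, div_lt_iff₀ (by positivity)] at hass2
    linarith
  have hunit : IsUnit A := hA ▸ isUnit_closedLoopA (by omega) hm he hkw hkv hkd hkdi hLR.1
    hLeta.1 hLphi.2.1 hS hS1 hVnom hγ hkphi.le hass1 hkphi_le
  refine ⟨hunit, fun b => ?_⟩
  have hbij : Function.Bijective A.mulVec :=
    ⟨mulVec_injective_iff_isUnit.2 hunit, mulVec_surjective_iff_isUnit.2 hunit⟩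
  simpa only [add_eq_zero_iff_eq_neg] using hbij.existsUnique (-b)
end

section
/- Under Assumptions 1 and 2, the set where the Lyapunov derivative vanishes is G = {(ω̄, V̄, η̄, φ̄) : ω̄ = 0, V̄ = 0, φ̄ = 0, and η̄ = k·1_n for some k ∈ ℝ}: with P = diag(K^ω(K^V)^{−1}M^{−1}, V^nom·C, I_n, Sᵀ L_φ S) and E = C^{−1}, a vector x = (ω̄, V̄, η̄, φ̄) ∈ ℝ^{3n+(n−1)} satisfies xᵀ(P A + Aᵀ P)x = 0 if and only if ω̄ = 0, V̄ = 0, φ̄ = 0 and η̄ is a scalar multiple of 1_n. -/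
open Matrix Filter

/-- The block-diagonal matrix `P = diag(K^ω (K^V)⁻¹ M⁻¹, V^nom C, I, Sᵀ L_φ S)`
of the Lyapunov function `W(x) = ½ xᵀ P x`. -/
noncomputable def lyapP {n : ℕ}
    (M C Kw KV Lphi : Matrix (Fin n) (Fin n) ℝ)
    (S : Matrix (Fin n) (Fin (n - 1)) ℝ) (Vnom : ℝ) :
    Matrix (Idx n) (Idx n) ℝ :=
  Matrix.fromBlocks
    (Matrix.fromBlocks (Kw * KV⁻¹ * M⁻¹) 0 0 (Vnom • C))
    0 0
    (Matrix.fromBlocks 1 0 0 (Sᵀ * Lphi * S))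

/-!
Since `P` is symmetric, `xᵀ (P A + Aᵀ P) x = 2 (P x) ⬝ (A x)`. Expanding this block by block,
the `η`–`ω` cross terms cancel, `S Sᵀ` acts as the identity on the range of `L_R` (which is
orthogonal to `1`, and `1` spans `ker Sᵀ`), and completing the square in `V` leaves `-2` times a
sum of five nonnegative terms: weighted squares of `ω` and of `K^ω (K^V)⁻¹ ω - V`, and the
Laplacian forms of `η`, of `V - k_φ / (2 V^nom) S φ` and, with the coefficient
`k_φ (γ - k_φ / (4 V^nom)) > 0` given by Assumption 2, of `S φ`. The form vanishes iff all five
terms do; a connected Laplacian vanishes only on constants, and `Sᵀ S = 1`, `Sᵀ 1 = 0` turn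
`S φ` constant into `φ = 0`.
-/

namespace Matrix

variable {ι : Type*} [Fintype ι]

theorem IsSymm.dotProduct_mul_add_transpose_mul_mulVec {R : Type*} [CommRing R] {P A : Matrix ι ι R}
    (hP : P.IsSymm) (x : ι → R) :
    x ⬝ᵥ ((P * A + Aᵀ * P) *ᵥ x) = 2 * ((P *ᵥ x) ⬝ᵥ (A *ᵥ x)) := by
  rw [add_mulVec, dotProduct_add, ← mulVec_mulVec, ← mulVec_mulVec, dotProduct_mulVec,
    ← mulVec_transpose, hP.eq, dotProduct_mulVec x Aᵀ, vecMul_transpose,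
    dotProduct_comm (A *ᵥ x)]
  ring

theorem diagonal_mulVec_eq_mul [DecidableEq ι] {R : Type*} [NonUnitalNonAssocSemiring R]
    (d v : ι → R) : diagonal d *ᵥ v = d * v :=
  funext (mulVec_diagonal d v)

theorem mulVec_const_eq_zero {κ R : Type*} [CommSemiring R] {A : Matrix κ ι R}
    (hA : A *ᵥ (fun _ => 1) = 0) (c : R) : A *ᵥ (fun _ => c) = 0 := by
  rw [show (fun _ => c : ι → R) = c • fun _ => 1 from funext fun _ => (mul_one c).symm,
    mulVec_smul, hA, smul_zero]

theorem inv_diagonal_of_ne_zero_s5 [DecidableEq ι] {K : Type*} [Field K] {d : ι → K}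
    (hd : ∀ i, d i ≠ 0) : (diagonal d)⁻¹ = diagonal d⁻¹ :=
  inv_eq_right_inv <| by
    rw [diagonal_mul_diagonal, ← diagonal_one]
    exact congrArg diagonal (funext fun i => mul_inv_cancel₀ (hd i))

theorem exists_eq_const_of_transpose_mulVec_eq_zero_s5 {K : Type*} [Field K] {m n : ℕ}
    {S : Matrix (Fin n) (Fin m) K} (hS : Sᵀ * S = 1) (hS1 : Sᵀ *ᵥ (fun _ => 1) = 0)
    (hnm : n ≤ m + 1) {z : Fin n → K} (hz : Sᵀ *ᵥ z = 0) : ∃ c : K, z = fun _ => c := by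
  rcases Nat.eq_zero_or_pos n with rfl | hn
  · exact ⟨0, funext fun i => i.elim0⟩
  have hsurj : Function.Surjective (mulVecLin Sᵀ) := fun v =>
    ⟨S *ᵥ v, by rw [mulVecLin_apply, mulVec_mulVec, hS, one_mulVec]⟩
  have hker : Module.finrank K (LinearMap.ker (mulVecLin Sᵀ)) ≤ 1 := by
    have := LinearMap.finrank_range_add_finrank_ker (mulVecLin Sᵀ)
    rw [LinearMap.range_eq_top.2 hsurj, finrank_top] at this
    simp only [Module.finrank_fin_fun] at this
    omega
  have hone : (fun _ : Fin n => (1 : K)) ≠ 0 := fun h => one_ne_zero (congrFun h ⟨0, hn⟩)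
  have hspan : K ∙ (fun _ : Fin n => (1 : K)) = LinearMap.ker (mulVecLin Sᵀ) :=
    Submodule.eq_of_le_of_finrank_le (Submodule.span_singleton_le_iff_mem _ _ |>.2 hS1)
      (by rwa [finrank_span_singleton hone])
  have hz' : z ∈ K ∙ (fun _ : Fin n => (1 : K)) := by rw [hspan]; exact hz
  obtain ⟨c, rfl⟩ := Submodule.mem_span_singleton.1 hz'
  exact ⟨c, funext fun _ => mul_one c⟩

theorem mulVec_transpose_mulVec_eq_self {m n : ℕ} {S : Matrix (Fin n) (Fin m) ℝ}
    (hS : Sᵀ * S = 1) (hS1 : Sᵀ *ᵥ (fun _ => 1) = 0) (hnm : n ≤ m + 1) {v : Fin n → ℝ}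
    (hv : v ⬝ᵥ (fun _ => 1) = 0) : S *ᵥ (Sᵀ *ᵥ v) = v := by
  -- `x` lies in `ker Sᵀ`, which is spanned by `1`, and is orthogonal to `1`.
  set x := S *ᵥ (Sᵀ *ᵥ v) - v
  obtain ⟨c, hc⟩ := exists_eq_const_of_transpose_mulVec_eq_zero_s5 hS hS1 hnm (z := x) (by
    rw [mulVec_sub, mulVec_mulVec, hS, one_mulVec, sub_self])
  have hx1 : x ⬝ᵥ (fun _ => 1) = 0 := by
    rw [sub_dotProduct, hv, sub_zero, dotProduct_comm, dotProduct_mulVec, ← mulVec_transpose, hS1,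
      zero_dotProduct]
  have hxx : x ⬝ᵥ x = 0 := by
    conv_lhs => arg 2; rw [hc]
    rw [show (fun _ => c : Fin n → ℝ) = c • fun _ => 1 from funext fun _ => (mul_one c).symm,
      dotProduct_smul, hx1, smul_zero]
  exact sub_eq_zero.1 (dotProduct_self_eq_zero.1 hxx)

end Matrix

theorem sum_mul_sq_nonneg {ι : Type*} [Fintype ι] {a : ι → ℝ} (ha : ∀ i, 0 < a i) (v : ι → ℝ) :
    0 ≤ ∑ i, a i * v i ^ 2 :=
  Finset.sum_nonneg fun i _ => by have := ha i; positivity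

theorem sum_mul_sq_eq_zero_iff {ι : Type*} [Fintype ι] {a : ι → ℝ} (ha : ∀ i, 0 < a i)
    (v : ι → ℝ) : ∑ i, a i * v i ^ 2 = 0 ↔ v = 0 := by
  rw [Finset.sum_eq_zero_iff_of_nonneg fun i _ => by have := ha i; positivity, funext_iff]
  simp [(ha _).ne']

namespace IsConnLaplacian

variable {n : ℕ} {L : Matrix (Fin n) (Fin n) ℝ}

theorem isSymm (hL : IsConnLaplacian L) : L.IsSymm := by
  rw [IsSymm, ← conjTranspose_eq_transpose_of_trivial]
  exact hL.1.1

theorem dotProduct_mulVec_self_nonneg (hL : IsConnLaplacian L) (v : Fin n → ℝ) :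
    0 ≤ v ⬝ᵥ (L *ᵥ v) := by
  simpa using hL.1.dotProduct_mulVec_nonneg v

theorem dotProduct_mulVec_self_eq_zero_iff (hL : IsConnLaplacian L) (v : Fin n → ℝ) :
    v ⬝ᵥ (L *ᵥ v) = 0 ↔ ∃ c : ℝ, v = fun _ => c := by
  constructor
  · intro h
    exact hL.2.2 v ((hL.1.dotProduct_mulVec_zero_iff v).1 (by simpa using h))
  · rintro ⟨c, rfl⟩
    rw [mulVec_const_eq_zero hL.2.1, dotProduct_zero]

theorem dotProduct_mulVec_comm (hL : IsConnLaplacian L) (v w : Fin n → ℝ) :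
    v ⬝ᵥ (L *ᵥ w) = w ⬝ᵥ (L *ᵥ v) := by
  simpa [hL.isSymm.eq] using dotProduct_transpose_mulVec L v w

theorem mulVec_dotProduct_one (hL : IsConnLaplacian L) (v : Fin n → ℝ) :
    (L *ᵥ v) ⬝ᵥ (fun _ => 1) = 0 := by
  rw [dotProduct_comm, hL.dotProduct_mulVec_comm, hL.2.1, dotProduct_zero]

end IsConnLaplacian

section ClosedLoop

variable {n : ℕ} {m c kw kv : Fin n → ℝ} (kd kdi : Fin n → ℝ)
  (LR Leta Lphi : Matrix (Fin n) (Fin n) ℝ) (S : Matrix (Fin n) (Fin (n - 1)) ℝ) (Vnom γ kphi : ℝ)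

theorem lyapP_isSymm (hLphi : Lphi.IsSymm) :
    (lyapP (diagonal m) (diagonal c) (diagonal kw) (diagonal kv) Lphi S Vnom).IsSymm := by
  refine .fromBlocks (.fromBlocks ?_ transpose_zero (by simp)) transpose_zero
    (.fromBlocks isSymm_one transpose_zero ?_)
  · rw [inv_diagonal, inv_diagonal, diagonal_mul_diagonal, diagonal_mul_diagonal]
    exact isSymm_diagonal _
  · simp [IsSymm, transpose_mul, hLphi.eq, Matrix.mul_assoc]

theorem lyapP_mulVec (hm : ∀ i, m i ≠ 0) (hkv : ∀ i, kv i ≠ 0) (ω V η : Fin n → ℝ)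
    (φ : Fin (n - 1) → ℝ) :
    lyapP (diagonal m) (diagonal c) (diagonal kw) (diagonal kv) Lphi S Vnom *ᵥ
        Sum.elim (Sum.elim ω V) (Sum.elim η φ) =
      Sum.elim (Sum.elim (fun i => kw i / (kv i * m i) * ω i) (fun i => Vnom * c i * V i))
        (Sum.elim η (Sᵀ *ᵥ (Lphi *ᵥ (S *ᵥ φ)))) := by
  rw [lyapP, inv_diagonal_of_ne_zero_s5 hm, inv_diagonal_of_ne_zero_s5 hkv]
  ext ((i | i) | (i | i)) <;>
    simp only [fromBlocks_mulVec, diagonal_mulVec_eq_mul, ← mulVec_mulVec, smul_mulVec,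
      zero_mulVec, one_mulVec, add_zero, zero_add, Sum.elim_inl, Sum.elim_inr, Sum.elim_comp_inl,
      Sum.elim_comp_inr, Pi.mul_apply, Pi.inv_apply, Pi.smul_apply, smul_eq_mul] <;> ring

theorem closedLoopA_mulVec (hc : ∀ i, c i ≠ 0) (hkw : ∀ i, kw i ≠ 0) (hkv : ∀ i, kv i ≠ 0)
    (ω V η : Fin n → ℝ) (φ : Fin (n - 1) → ℝ) :
    closedLoopA (diagonal m) (diagonal c)⁻¹ (diagonal kw) (diagonal kv) (diagonal kd)
        (diagonal kdi) LR Leta Lphi S Vnom γ *ᵥ Sum.elim (Sum.elim ω V) (Sum.elim η φ) =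
      Sum.elim
        (Sum.elim
          (fun i => m i * (kv i * V i - (kd i + kw i) * ω i - kv i / kw i * kdi i * η i
            - (Lphi *ᵥ (S *ᵥ φ)) i))
          (fun i => ((kw i * ω i + (Lphi *ᵥ (S *ᵥ φ)) i - kv i * V i) / Vnom
            - (LR *ᵥ V) i) / c i))
        (Sum.elim (fun i => kdi i * ω i - (Leta *ᵥ η) i)
          (Sᵀ *ᵥ (kw / kv * ω) - γ • φ)) := by
  rw [closedLoopA, inv_diagonal_of_ne_zero_s5 hc, inv_diagonal_of_ne_zero_s5 hkw,
    inv_diagonal_of_ne_zero_s5 hkv]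
  have hy : kv⁻¹ * (kw * ω) = kw / kv * ω := by rw [div_eq_mul_inv]; ring
  ext ((i | i) | (i | i)) <;>
    simp only [fromBlocks_mulVec, diagonal_mulVec_eq_mul, ← mulVec_mulVec, smul_mulVec,
      add_mulVec, neg_mulVec, hy, zero_mulVec, one_mulVec, add_zero, zero_add, Sum.elim_inl,
      Sum.elim_inr, Sum.elim_comp_inl, Sum.elim_comp_inr, Pi.add_apply, Pi.sub_apply,
      Pi.neg_apply, Pi.mul_apply, Pi.inv_apply, Pi.smul_apply, smul_eq_mul] <;> ring

theorem lyapP_mulVec_dotProduct_closedLoopA_mulVec (hm : ∀ i, m i ≠ 0) (hc : ∀ i, c i ≠ 0)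
    (hkw : ∀ i, kw i ≠ 0) (hkv : ∀ i, kv i ≠ 0) (hVnom : Vnom ≠ 0) (hLR : IsConnLaplacian LR)
    (hS : Sᵀ * S = 1) (hS1 : Sᵀ *ᵥ (fun _ => 1) = 0) (ω V η : Fin n → ℝ)
    (φ : Fin (n - 1) → ℝ) :
    (lyapP (diagonal m) (diagonal c) (diagonal kw) (diagonal kv) (kphi • LR) S Vnom *ᵥ
        Sum.elim (Sum.elim ω V) (Sum.elim η φ)) ⬝ᵥ
      (closedLoopA (diagonal m) (diagonal c)⁻¹ (diagonal kw) (diagonal kv) (diagonal kd)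
        (diagonal kdi) LR Leta (kphi • LR) S Vnom γ *ᵥ Sum.elim (Sum.elim ω V) (Sum.elim η φ)) =
      -(∑ i, kw i * kd i / kv i * ω i ^ 2 + ∑ i, kv i * (kw i / kv i * ω i - V i) ^ 2
        + η ⬝ᵥ (Leta *ᵥ η)
        + Vnom * ((V - (kphi / (2 * Vnom)) • (S *ᵥ φ)) ⬝ᵥ
            (LR *ᵥ (V - (kphi / (2 * Vnom)) • (S *ᵥ φ))))
        + kphi * (γ - kphi / (4 * Vnom)) * ((S *ᵥ φ) ⬝ᵥ (LR *ᵥ (S *ᵥ φ)))) := by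
  rw [lyapP_mulVec _ _ _ hm hkv, closedLoopA_mulVec kd kdi LR Leta _ S Vnom γ hc hkw hkv,
    sumElim_dotProduct_sumElim, sumElim_dotProduct_sumElim, sumElim_dotProduct_sumElim]
  set w := S *ᵥ φ
  have hproj : S *ᵥ (Sᵀ *ᵥ (LR *ᵥ w)) = LR *ᵥ w :=
    mulVec_transpose_mulVec_eq_self hS hS1 (by omega) (hLR.mulVec_dotProduct_one w)
  have hφ4 : (Sᵀ *ᵥ ((kphi • LR) *ᵥ w)) ⬝ᵥ (Sᵀ *ᵥ (kw / kv * ω) - γ • φ) =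
      kphi * ((LR *ᵥ w) ⬝ᵥ (kw / kv * ω)) - kphi * γ * ((LR *ᵥ w) ⬝ᵥ w) := by
    have hω : (Sᵀ *ᵥ (LR *ᵥ w)) ⬝ᵥ (Sᵀ *ᵥ (kw / kv * ω)) = (LR *ᵥ w) ⬝ᵥ (kw / kv * ω) := by
      rw [dotProduct_transpose_mulVec, hproj, dotProduct_comm]
    have hφ : (Sᵀ *ᵥ (LR *ᵥ w)) ⬝ᵥ φ = (LR *ᵥ w) ⬝ᵥ w := by
      rw [dotProduct_comm, dotProduct_transpose_mulVec]
    simp only [smul_mulVec, mulVec_smul, smul_dotProduct, dotProduct_sub, dotProduct_smul, hω, hφ,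
      smul_eq_mul]
    ring
  have hu : (V - (kphi / (2 * Vnom)) • w) ⬝ᵥ (LR *ᵥ (V - (kphi / (2 * Vnom)) • w)) =
      V ⬝ᵥ (LR *ᵥ V) - kphi / Vnom * (V ⬝ᵥ (LR *ᵥ w))
        + (kphi / (2 * Vnom)) ^ 2 * (w ⬝ᵥ (LR *ᵥ w)) := by
    simp only [mulVec_sub, mulVec_smul, sub_dotProduct, dotProduct_sub, smul_dotProduct,
      dotProduct_smul, smul_eq_mul, hLR.dotProduct_mulVec_comm w V]
    ring
  rw [hφ4, hu]
  simp only [dotProduct, smul_mulVec, Pi.smul_apply, smul_eq_mul, Pi.mul_apply, Pi.div_apply,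
    Finset.mul_sum, ← Finset.sum_neg_distrib, ← Finset.sum_sub_distrib, ← Finset.sum_add_distrib]
  refine Finset.sum_congr rfl fun i _ => ?_
  have := hm i; have := hc i; have := hkw i; have := hkv i
  field_simp
  ring

end ClosedLoop

theorem lyapunov_terms_eq_zero_iff {n : ℕ} {kw kd kv : Fin n → ℝ} (hkw : ∀ i, 0 < kw i)
    (hkd : ∀ i, 0 < kd i) (hkv : ∀ i, 0 < kv i) {LR Leta : Matrix (Fin n) (Fin n) ℝ}
    (hLR : IsConnLaplacian LR) (hLeta : IsConnLaplacian Leta)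
    {S : Matrix (Fin n) (Fin (n - 1)) ℝ} (hS : Sᵀ * S = 1) (hS1 : Sᵀ *ᵥ (fun _ => 1) = 0)
    {Vnom a κ : ℝ} (hVnom : 0 < Vnom) (hκ : 0 < κ) (ω V η : Fin n → ℝ) (φ : Fin (n - 1) → ℝ) :
    ∑ i, kw i * kd i / kv i * ω i ^ 2 + ∑ i, kv i * (kw i / kv i * ω i - V i) ^ 2
        + η ⬝ᵥ (Leta *ᵥ η) + Vnom * ((V - a • (S *ᵥ φ)) ⬝ᵥ (LR *ᵥ (V - a • (S *ᵥ φ))))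
        + κ * ((S *ᵥ φ) ⬝ᵥ (LR *ᵥ (S *ᵥ φ))) = 0 ↔
      ω = 0 ∧ V = 0 ∧ φ = 0 ∧ ∃ k : ℝ, η = fun _ => k := by
  have hgain : ∀ i, 0 < kw i * kd i / kv i := fun i => by
    have := hkw i; have := hkd i; have := hkv i; positivity
  have h1 := sum_mul_sq_nonneg hgain ω
  have h2 := sum_mul_sq_nonneg hkv (fun i => kw i / kv i * ω i - V i)
  have h3 := hLeta.dotProduct_mulVec_self_nonneg η
  have h4 := mul_nonneg hVnom.le (hLR.dotProduct_mulVec_self_nonneg (V - a • (S *ᵥ φ)))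
  have h5 := mul_nonneg hκ.le (hLR.dotProduct_mulVec_self_nonneg (S *ᵥ φ))
  rw [add_eq_zero_iff_of_nonneg (add_nonneg (add_nonneg (add_nonneg h1 h2) h3) h4) h5,
    add_eq_zero_iff_of_nonneg (add_nonneg (add_nonneg h1 h2) h3) h4,
    add_eq_zero_iff_of_nonneg (add_nonneg h1 h2) h3, add_eq_zero_iff_of_nonneg h1 h2,
    sum_mul_sq_eq_zero_iff hgain, sum_mul_sq_eq_zero_iff hkv,
    hLeta.dotProduct_mulVec_self_eq_zero_iff, mul_eq_zero, mul_eq_zero,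
    or_iff_right hVnom.ne', or_iff_right hκ.ne', hLR.dotProduct_mulVec_self_eq_zero_iff,
    hLR.dotProduct_mulVec_self_eq_zero_iff]
  constructor
  · rintro ⟨⟨⟨⟨rfl, hV⟩, hη⟩, -⟩, c, hc⟩
    refine ⟨rfl, funext fun i => by simpa using congrFun hV i, ?_, hη⟩
    rw [← one_mulVec φ, ← hS, ← mulVec_mulVec, hc, mulVec_const_eq_zero hS1]
  · rintro ⟨rfl, rfl, rfl, hη⟩
    exact ⟨⟨⟨⟨rfl, funext fun _ => by simp⟩, hη⟩, 0, by simp; rfl⟩, 0, by simp; rfl⟩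

theorem stmt_5_general {n : ℕ}
    (m c kw kv kd kdi : Fin n → ℝ)
    (hm : ∀ i, 0 < m i) (hc : ∀ i, 0 < c i) (hkw : ∀ i, 0 < kw i)
    (hkv : ∀ i, 0 < kv i) (hkd : ∀ i, 0 < kd i)
    (E : Matrix (Fin n) (Fin n) ℝ) (hE : E = (Matrix.diagonal c)⁻¹)
    (LR Leta Lphi : Matrix (Fin n) (Fin n) ℝ)
    (hLR : IsConnLaplacian LR) (hLeta : IsConnLaplacian Leta)
    (S : Matrix (Fin n) (Fin (n - 1)) ℝ)
    (hS : Sᵀ * S = 1) (hS1 : Sᵀ *ᵥ (fun _ => (1 : ℝ)) = 0)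
    (Vnom γ kphi : ℝ) (hVnom : 0 < Vnom) (hkphi : 0 < kphi)
    -- Assumption 1
    (hass1 : Lphi = kphi • LR)
    -- Assumption 2
    (hass2 : γ > kphi / (4 * Vnom))
    (A : Matrix (Idx n) (Idx n) ℝ)
    (hA : A = closedLoopA (Matrix.diagonal m) E
      (Matrix.diagonal kw) (Matrix.diagonal kv) (Matrix.diagonal kd)
      (Matrix.diagonal kdi) LR Leta Lphi S Vnom γ)
    (P : Matrix (Idx n) (Idx n) ℝ)
    (hP : P = lyapP (Matrix.diagonal m) (Matrix.diagonal c)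
      (Matrix.diagonal kw) (Matrix.diagonal kv) Lphi S Vnom) :
    -- the Lyapunov derivative vanishes at `x = (ω̄, V̄, η̄, φ̄)` iff
    -- `ω̄ = 0`, `V̄ = 0`, `φ̄ = 0` and `η̄` is a scalar multiple of `1ₙ`
    ∀ x : Idx n → ℝ,
      x ⬝ᵥ ((P * A + Aᵀ * P) *ᵥ x) = 0 ↔
        ((∀ i, x (Sum.inl (Sum.inl i)) = 0) ∧
         (∀ i, x (Sum.inl (Sum.inr i)) = 0) ∧
         (∀ i, x (Sum.inr (Sum.inr i)) = 0) ∧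
         (∃ k : ℝ, ∀ i, x (Sum.inr (Sum.inl i)) = k)) := by
  subst hE hass1 hA hP
  intro x
  obtain ⟨ω, V, η, φ, rfl⟩ : ∃ ω V η φ, x = Sum.elim (Sum.elim ω V) (Sum.elim η φ) :=
    ⟨_, _, _, _, by ext ((i | i) | (i | i)) <;> rfl⟩
  have hκ : 0 < kphi * (γ - kphi / (4 * Vnom)) := mul_pos hkphi (sub_pos.2 hass2)
  rw [(lyapP_isSymm _ _ _ (hLR.isSymm.smul kphi)).dotProduct_mul_add_transpose_mul_mulVec,
    lyapP_mulVec_dotProduct_closedLoopA_mulVec _ _ _ _ _ _ _ _ (fun i => (hm i).ne')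
      (fun i => (hc i).ne') (fun i => (hkw i).ne') (fun i => (hkv i).ne') hVnom.ne' hLR hS hS1,
    mul_neg, neg_eq_zero, mul_eq_zero, or_iff_right two_ne_zero,
    lyapunov_terms_eq_zero_iff hkw hkd hkv hLR hLeta hS hS1 hVnom hκ]
  simp only [Sum.elim_inl, Sum.elim_inr, funext_iff, Pi.zero_apply]

theorem stmt_5 {n : ℕ} (hn : 2 ≤ n)
    (m c kw kv kd kdi : Fin n → ℝ)
    (hm : ∀ i, 0 < m i) (hc : ∀ i, 0 < c i) (hkw : ∀ i, 0 < kw i)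
    (hkv : ∀ i, 0 < kv i) (hkd : ∀ i, 0 < kd i) (hkdi : ∀ i, 0 < kdi i)
    (E : Matrix (Fin n) (Fin n) ℝ) (hE : E = (Matrix.diagonal c)⁻¹)
    (LR Leta Lphi : Matrix (Fin n) (Fin n) ℝ)
    (hLR : IsConnLaplacian LR) (hLeta : IsConnLaplacian Leta)
    (hLphi : IsConnLaplacian Lphi)
    (S : Matrix (Fin n) (Fin (n - 1)) ℝ)
    (hS : Sᵀ * S = 1) (hS1 : Sᵀ *ᵥ (fun _ => (1 : ℝ)) = 0)
    (Vnom γ kphi : ℝ) (hVnom : 0 < Vnom) (hγ : 0 < γ) (hkphi : 0 < kphi)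
    -- Assumption 1
    (hass1 : Lphi = kphi • LR)
    -- Assumption 2
    (hass2 : γ > kphi / (4 * Vnom))
    (A : Matrix (Idx n) (Idx n) ℝ)
    (hA : A = closedLoopA (Matrix.diagonal m) E
      (Matrix.diagonal kw) (Matrix.diagonal kv) (Matrix.diagonal kd)
      (Matrix.diagonal kdi) LR Leta Lphi S Vnom γ)
    (P : Matrix (Idx n) (Idx n) ℝ)
    (hP : P = lyapP (Matrix.diagonal m) (Matrix.diagonal c)
      (Matrix.diagonal kw) (Matrix.diagonal kv) Lphi S Vnom) :
    -- the Lyapunov derivative vanishes at `x = (ω̄, V̄, η̄, φ̄)` iff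
    -- `ω̄ = 0`, `V̄ = 0`, `φ̄ = 0` and `η̄` is a scalar multiple of `1ₙ`
    ∀ x : Idx n → ℝ,
      x ⬝ᵥ ((P * A + Aᵀ * P) *ᵥ x) = 0 ↔
        ((∀ i, x (Sum.inl (Sum.inl i)) = 0) ∧
         (∀ i, x (Sum.inl (Sum.inr i)) = 0) ∧
         (∀ i, x (Sum.inr (Sum.inr i)) = 0) ∧
         (∃ k : ℝ, ∀ i, x (Sum.inr (Sum.inl i)) = k)) :=
  stmt_5_general m c kw kv kd kdi hm hc hkw hkv hkd E hE LR Leta Lphi hLR hLeta S hS hS1 Vnom γ kphi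
    hVnom hkphi hass1 hass2 A hA P hP
end
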